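/- arXiv:1103.1426 — 8 statements merged into one kernel-verified Lean document; each statement's English description precedes it below -/
import Mathlib

section
/- Let g : [0,∞) → (0,∞) be a positive increasing function with ∫_0^∞ 1/g(x) dx < ∞. Let (v_n) be a sequence of positive reals with partial sums A_n = ∑_{k≤n} v_k tending to infinity. Then ∑_n v_n / g(A_n) < ∞. -/
open Filter MeasureTheory Set

/-!
With `S n = v 0 + ⋯ + v (n - 1)`, the term `v n / g (S (n + 1))` is the right Riemann sum of the
decreasing function `1 / g` on `[S n, S (n + 1)]`, so it is at most the integral of `1 / g` there.
These intervals tile `[0, S n]`, so the partial sums are bounded by `∫ x in Ici 0, 1 / g x`.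
-/

theorem AntitoneOn.sub_mul_le_intervalIntegral {f : ℝ → ℝ} {x y : ℝ} (hxy : x ≤ y)
    (hf : AntitoneOn f (Icc x y)) : (y - x) * f y ≤ ∫ t in x..y, f t := by
  have hy : y ∈ Icc x y := right_mem_Icc.2 hxy
  calc (y - x) * f y = ∫ _ in x..y, f y := by simp
    _ ≤ ∫ t in x..y, f t :=
      intervalIntegral.integral_mono_on hxy intervalIntegrable_const
        (hf.mono (uIcc_of_le hxy).subset).intervalIntegrable fun t ht => hf ht hy ht.2

theorem summable_sub_mul_of_antitoneOn {f : ℝ → ℝ} {a : ℝ} {S : ℕ → ℝ}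
    (hf : AntitoneOn f (Ici a)) (hf0 : ∀ x ∈ Ici a, 0 ≤ f x) (hfi : IntegrableOn f (Ici a))
    (hS : Monotone S) (hS0 : a ≤ S 0) :
    Summable fun n => (S (n + 1) - S n) * f (S (n + 1)) := by
  have hSa : ∀ n, a ≤ S n := fun n => hS0.trans (hS n.zero_le)
  have hIcc : ∀ n, Icc (S n) (S (n + 1)) ⊆ Ici a := fun n =>
    (Icc_subset_Ici_iff (hS n.le_succ)).2 (hSa n)
  have hterm : ∀ n, 0 ≤ (S (n + 1) - S n) * f (S (n + 1)) := fun n =>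
    mul_nonneg (sub_nonneg.2 (hS n.le_succ)) (hf0 _ (hSa _))
  refine summable_of_sum_range_le (c := ∫ t in Ici a, f t) hterm fun n => ?_
  calc ∑ i ∈ Finset.range n, (S (i + 1) - S i) * f (S (i + 1))
      ≤ ∑ i ∈ Finset.range n, ∫ t in S i..S (i + 1), f t :=
        Finset.sum_le_sum fun i _ => (hf.mono (hIcc i)).sub_mul_le_intervalIntegral (hS i.le_succ)
    _ = ∫ t in S 0..S n, f t :=
        intervalIntegral.sum_integral_adjacent_intervals fun i _ =>
          (hf.mono ((uIcc_of_le (hS i.le_succ)).subset.trans (hIcc i))).intervalIntegrable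
    _ = ∫ t in Ioc (S 0) (S n), f t := intervalIntegral.integral_of_le (hS n.zero_le)
    _ ≤ ∫ t in Ici a, f t :=
        setIntegral_mono_set hfi ((ae_restrict_mem measurableSet_Ici).mono hf0)
          (Eventually.of_forall fun t (ht : t ∈ Ioc (S 0) (S n)) => hS0.trans ht.1.le)

theorem stmt_2_general (g : ℝ → ℝ) (hgpos : ∀ x, 0 ≤ x → 0 < g x)
    (hgmono : MonotoneOn g (Set.Ici 0))
    (hgint : IntegrableOn (fun x => 1 / g x) (Set.Ici 0))
    (v : ℕ → ℝ) (hv : ∀ n, 0 < v n) :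
    Summable (fun n => v n / g (∑ k ∈ Finset.range (n + 1), v k)) := by
  have hanti : AntitoneOn (fun x => 1 / g x) (Ici 0) := fun x hx y hy hxy =>
    one_div_le_one_div_of_le (hgpos x hx) (hgmono hx hy hxy)
  have hpartial : Monotone fun n => ∑ k ∈ Finset.range n, v k :=
    monotone_nat_of_le_succ fun n => by simpa [Finset.sum_range_succ] using (hv n).le
  convert summable_sub_mul_of_antitoneOn hanti (fun x hx => (one_div_pos.2 (hgpos x hx)).le)
    hgint hpartial le_rfl using 2 with n
  rw [Finset.sum_range_succ_sub_sum, div_eq_mul_one_div]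

theorem stmt_2 (g : ℝ → ℝ) (hgpos : ∀ x, 0 ≤ x → 0 < g x)
    (hgmono : MonotoneOn g (Set.Ici 0))
    (hgint : IntegrableOn (fun x => 1 / g x) (Set.Ici 0))
    (v : ℕ → ℝ) (hv : ∀ n, 0 < v n)
    (hA : Tendsto (fun n => ∑ k ∈ Finset.range (n + 1), v k) atTop atTop) :
    Summable (fun n => v n / g (∑ k ∈ Finset.range (n + 1), v k)) :=
  stmt_2_general g hgpos hgmono hgint v hv
end

section
/- Let h : ℝ → ℝ satisfy h(x) = h(|x|) ≥ 0, and suppose h(x)/x is monotone increasing for x > 0. Then for any real x ≥ 0, any A > 0, and any v with v/A ≤ 1, we have (h(x) - v)/A - x/h⁻¹(A) > -2, where h⁻¹ denotes the inverse of h restricted to [0,∞). -/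
theorem stmt_5 (h hinv : ℝ → ℝ)
    (heven : ∀ x, h x = h |x|) (hnn : ∀ x, 0 ≤ h x)
    (hratio : StrictMonoOn (fun x => h x / x) (Set.Ioi 0))
    (hleft : ∀ x, 0 ≤ x → hinv (h x) = x)
    (hright : ∀ y, 0 ≤ y → h (hinv y) = y)
    (hinv_nn : ∀ y, 0 ≤ y → 0 ≤ hinv y)
    (x A v : ℝ) (hx : 0 ≤ x) (hA : 0 < A) (hv0 : 0 ≤ v) (hvA : v / A ≤ 1) :
    (h x - v) / A - x / hinv A > -2 := by
  have hb0 : 0 ≤ hinv A := hinv_nn A hA.le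
  have hbA : h (hinv A) = A := hright A hA.le
  have hkey : h x / A - 1 ≤ (h x - v) / A := by
    rw [sub_div]
    have : v / A ≤ 1 := hvA
    linarith
  have hmain : h x / A - x / hinv A > -1 := by
    rcases eq_or_lt_of_le hb0 with hb | hb
    · rw [← hb, div_zero]
      have := hnn x
      have : 0 ≤ h x / A := div_nonneg this hA.le
      linarith
    · rcases lt_trichotomy x (hinv A) with hlt | heq | hgt
      · have h1 : x / hinv A < 1 := (div_lt_one hb).mpr hlt
        have h2 : 0 ≤ h x / A := div_nonneg (hnn x) hA.le
        linarith
      · rw [heq, hbA, div_self hA.ne', div_self hb.ne']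
        norm_num
      · have hx0 : 0 < x := lt_trans hb hgt
        have := hratio (Set.mem_Ioi.mpr hb) (Set.mem_Ioi.mpr hx0) hgt
        simp only at this
        rw [hbA] at this
        have h1 : x / hinv A < h x / A := by
          rw [div_lt_div_iff₀ hb hx0] at this
          rw [div_lt_div_iff₀ hb hA]
          nlinarith
        linarith
  linarith
end

section
/- Let (X_n) be a uniformly bounded martingale difference sequence, |X_n| ≤ C a.s., with conditional variances v_n = E[X_n² | ℱ_{n-1}]. Then almost surely: ∑_n v_n < ∞ if and only if ∑_n X_n converges. -/
/-!
The partial sums `S n = ∑ k < n, X (k + 1)` form a martingale with orthogonal increments, so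
`E[S n ^ 2] = E[∑ k < n, v (k + 1)]`. Multiplying each increment by the indicator of an
`ℱ k`-measurable event `G k` keeps it a martingale difference, and we choose the events so that the
gated sum agrees with `S` on the event of interest.

* If `∑ v ≤ K`, gate by "the running conditional variance is still `≤ K`": the gated sum is then
  bounded in `L²`, hence converges a.e. by the martingale convergence theorem.
* If `|S n| ≤ K` for all `n`, gate by "`|S j| ≤ K` for all `j ≤ k`": the gated sum is then bounded
  by `K + C`, so the gated conditional variances have summable expectations and are a.e. summable.

Letting `K` run through `ℕ` gives both implications almost surely.
-/

open Filter MeasureTheory Finset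
open scoped Topology

theorem sum_ite_sum_le_le {w : ℕ → ℝ} (hw : ∀ k, 0 ≤ w k) {K : ℝ} (hK : 0 ≤ K) (n : ℕ) :
    ∑ k ∈ range n, (if ∑ j ∈ range (k + 1), w j ≤ K then w k else 0) ≤ K := by
  induction n with
  | zero => simpa using hK
  | succ n ih =>
    by_cases hn : ∑ j ∈ range (n + 1), w j ≤ K
    · calc ∑ k ∈ range (n + 1), (if ∑ j ∈ range (k + 1), w j ≤ K then w k else 0)
          ≤ ∑ k ∈ range (n + 1), w k := sum_le_sum fun k _ => by split_ifs <;> simp [hw k]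
        _ ≤ K := hn
    · rwa [sum_range_succ, if_neg hn, add_zero]

theorem abs_sum_ite_abs_sum_le_le {d : ℕ → ℝ} {C K : ℝ} (hd : ∀ k, |d k| ≤ C) (hK : 0 ≤ K)
    (n : ℕ) :
    |∑ k ∈ range n, (if ∀ j ≤ k, |∑ i ∈ range j, d i| ≤ K then d k else 0)| ≤ K + C := by
  induction n with
  | zero => simpa using add_nonneg hK ((abs_nonneg _).trans (hd 0))
  | succ n ih =>
    by_cases hn : ∀ j ≤ n, |∑ i ∈ range j, d i| ≤ K
    · have hsum : ∑ k ∈ range (n + 1), (if ∀ j ≤ k, |∑ i ∈ range j, d i| ≤ K then d k else 0) =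
          ∑ k ∈ range (n + 1), d k :=
        sum_congr rfl fun k hk => if_pos fun j hj =>
          hn j (hj.trans (Nat.lt_succ_iff.1 (mem_range.1 hk)))
      rw [hsum, sum_range_succ]
      exact (abs_add_le _ _).trans (add_le_add (hn n le_rfl) (hd n))
    · rwa [sum_range_succ, if_neg hn, add_zero]

section

variable {Ω : Type*} {m0 : MeasurableSpace Ω} {μ : Measure Ω}

theorem ae_summable_of_sum_integral_le {f : ℕ → Ω → ℝ} {B : ℝ} (hf : ∀ n, Integrable (f n) μ)
    (hf_nonneg : ∀ n, 0 ≤ᵐ[μ] f n) (hB : ∀ n, ∑ k ∈ range n, ∫ ω, f k ω ∂μ ≤ B) :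
    ∀ᵐ ω ∂μ, Summable (f · ω) := by
  have heLp : ∀ n, eLpNorm (f n) 1 μ = ENNReal.ofReal (∫ ω, f n ω ∂μ) := fun n => by
    rw [eLpNorm_one_eq_lintegral_enorm, ofReal_integral_eq_lintegral_ofReal (hf n) (hf_nonneg n)]
    exact lintegral_congr_ae ((hf_nonneg n).mono fun ω hω => Real.enorm_of_nonneg hω)
  have htsum : ∑' n, eLpNorm (f n) 1 μ ≠ ⊤ := by
    refine ne_top_of_le_ne_top (ENNReal.ofReal_ne_top (r := B))
      (ENNReal.tsum_le_of_sum_range_le fun n => ?_)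
    simp_rw [heLp]
    rw [← ENNReal.ofReal_sum_of_nonneg fun k _ => integral_nonneg_of_ae (hf_nonneg k)]
    exact ENNReal.ofReal_le_ofReal (hB n)
  filter_upwards [summable_norm_of_tsum_eLpNorm_ne_top le_rfl
    (fun n => (hf n).aestronglyMeasurable) htsum] with ω hω
  exact hω.of_norm

theorem eLpNorm_one_le_of_integral_sq_le [IsFiniteMeasure μ] {f : Ω → ℝ} {B : ℝ}
    (hf : Integrable f μ) (hf_sq : Integrable (fun ω => f ω ^ 2) μ)
    (hB : ∫ ω, f ω ^ 2 ∂μ ≤ B) : eLpNorm f 1 μ ≤ ENNReal.ofReal (μ.real Set.univ + B) := by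
  rw [eLpNorm_one_eq_lintegral_enorm, ← ofReal_integral_norm_eq_lintegral_enorm hf]
  refine ENNReal.ofReal_le_ofReal ?_
  calc ∫ ω, ‖f ω‖ ∂μ ≤ ∫ ω, (1 + f ω ^ 2) ∂μ :=
        integral_mono hf.norm ((integrable_const 1).add hf_sq) fun ω => by
          rw [Real.norm_eq_abs, ← sq_abs (f ω)]
          nlinarith [sq_nonneg (|f ω| - 1)]
    _ ≤ μ.real Set.univ + B := by
      rw [integral_add (integrable_const 1) hf_sq, integral_const, smul_eq_mul, mul_one]
      linarith

theorem integrable_sq_of_abs_le [IsFiniteMeasure μ] {f : Ω → ℝ} {c : ℝ}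
    (hf : AEStronglyMeasurable f μ) (hfc : ∀ᵐ ω ∂μ, |f ω| ≤ c) :
    Integrable (fun ω => f ω ^ 2) μ :=
  .of_bound (hf.pow 2) (c ^ 2) (hfc.mono fun ω hω => by
    rw [Real.norm_eq_abs, abs_pow]
    exact pow_le_pow_left₀ (abs_nonneg _) hω 2)

theorem ae_condExp_sq_nonneg (ℱ : Filtration ℕ m0) (D : ℕ → Ω → ℝ) :
    ∀ᵐ ω ∂μ, ∀ k, 0 ≤ μ[fun ω => D k ω ^ 2 | ℱ k] ω :=
  ae_all_iff.2 fun k => condExp_nonneg (ae_of_all μ fun ω => sq_nonneg (D k ω))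

structure IsBddMartingaleDiff (ℱ : Filtration ℕ m0) (μ : Measure Ω) (D : ℕ → Ω → ℝ) (C : ℝ) :
    Prop where
  stronglyMeasurable : ∀ n, StronglyMeasurable[ℱ (n + 1)] (D n)
  abs_le : ∀ n, ∀ᵐ ω ∂μ, |D n ω| ≤ C
  condExp_eq_zero : ∀ n, μ[D n | ℱ n] =ᵐ[μ] 0

namespace IsBddMartingaleDiff

variable {ℱ : Filtration ℕ m0} {D : ℕ → Ω → ℝ} {C : ℝ}

theorem integrable [IsFiniteMeasure μ] (hD : IsBddMartingaleDiff ℱ μ D C) (n : ℕ) :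
    Integrable (D n) μ :=
  .of_bound ((hD.stronglyMeasurable n).mono (ℱ.le _)).aestronglyMeasurable C (hD.abs_le n)

theorem integrable_sq [IsFiniteMeasure μ] (hD : IsBddMartingaleDiff ℱ μ D C) (n : ℕ) :
    Integrable (fun ω => D n ω ^ 2) μ :=
  integrable_sq_of_abs_le ((hD.stronglyMeasurable n).mono (ℱ.le _)).aestronglyMeasurable
    (hD.abs_le n)

theorem indicator [IsFiniteMeasure μ] (hD : IsBddMartingaleDiff ℱ μ D C) {G : ℕ → Set Ω}
    (hG : ∀ n, MeasurableSet[ℱ n] (G n)) :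
    IsBddMartingaleDiff ℱ μ (fun n => (G n).indicator (D n)) C where
  stronglyMeasurable n := (hD.stronglyMeasurable n).indicator (ℱ.mono n.le_succ _ (hG n))
  abs_le n := (hD.abs_le n).mono fun ω hω => by
    simpa only [Real.norm_eq_abs] using (norm_indicator_le_norm_self (D n) ω).trans hω
  condExp_eq_zero n := by
    filter_upwards [condExp_indicator (hD.integrable n) (hG n), hD.condExp_eq_zero n] with ω h h0
    simp [h, h0]

theorem stronglyMeasurable_sum (hD : IsBddMartingaleDiff ℱ μ D C) (n : ℕ) :
    StronglyMeasurable[ℱ n] (fun ω => ∑ k ∈ range n, D k ω) :=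
  Finset.stronglyMeasurable_fun_sum _ fun k hk =>
    (hD.stronglyMeasurable k).mono (ℱ.mono (mem_range.1 hk))

theorem abs_sum_le (hD : IsBddMartingaleDiff ℱ μ D C) (n : ℕ) :
    ∀ᵐ ω ∂μ, |∑ k ∈ range n, D k ω| ≤ n * C := by
  filter_upwards [ae_all_iff.2 hD.abs_le] with ω hω
  calc |∑ k ∈ range n, D k ω| ≤ ∑ k ∈ range n, |D k ω| := abs_sum_le_sum_abs _ _
    _ ≤ n * C := by simpa using sum_le_sum fun k (_ : k ∈ range n) => hω k

theorem martingale_sum [IsFiniteMeasure μ] (hD : IsBddMartingaleDiff ℱ μ D C) :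
    Martingale (fun n ω => ∑ k ∈ range n, D k ω) ℱ μ := by
  refine martingale_of_condExp_sub_eq_zero_nat hD.stronglyMeasurable_sum (fun n => ?_) fun n => ?_
  · exact .of_bound ((hD.stronglyMeasurable_sum n).mono (ℱ.le n)).aestronglyMeasurable _
      (hD.abs_sum_le n)
  · have hdiff : (fun ω => ∑ k ∈ range (n + 1), D k ω) - (fun ω => ∑ k ∈ range n, D k ω) = D n := by
      ext ω
      simp [sum_range_succ]
    rw [hdiff]
    exact hD.condExp_eq_zero n

theorem integral_mul_eq_zero [IsFiniteMeasure μ] (hD : IsBddMartingaleDiff ℱ μ D C) {n : ℕ}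
    {g : Ω → ℝ} (hg : StronglyMeasurable[ℱ n] g) (hgD : Integrable (g * D n) μ) :
    ∫ ω, (g * D n) ω ∂μ = 0 := by
  rw [← integral_condExp (ℱ.le n)]
  refine (integral_congr_ae ((condExp_mul_of_stronglyMeasurable_left hg hgD
    (hD.integrable n)).trans ?_)).trans (integral_zero Ω ℝ)
  filter_upwards [hD.condExp_eq_zero n] with ω hω
  simp [hω]

theorem integrable_sum_sq [IsFiniteMeasure μ] (hD : IsBddMartingaleDiff ℱ μ D C) (n : ℕ) :
    Integrable (fun ω => (∑ k ∈ range n, D k ω) ^ 2) μ :=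
  integrable_sq_of_abs_le ((hD.stronglyMeasurable_sum n).mono (ℱ.le n)).aestronglyMeasurable
    (hD.abs_sum_le n)

theorem integral_sum_sq [IsFiniteMeasure μ] (hD : IsBddMartingaleDiff ℱ μ D C) (n : ℕ) :
    ∫ ω, (∑ k ∈ range n, D k ω) ^ 2 ∂μ = ∑ k ∈ range n, ∫ ω, D k ω ^ 2 ∂μ := by
  induction n with
  | zero => simp
  | succ n ih =>
    set S : Ω → ℝ := fun ω => ∑ k ∈ range n, D k ω with hS
    have hS_meas : AEStronglyMeasurable S μ :=
      ((hD.stronglyMeasurable_sum n).mono (ℱ.le n)).aestronglyMeasurable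
    have hS_sq : Integrable (fun ω => S ω ^ 2) μ := hD.integrable_sum_sq n
    have hSD : Integrable (S * D n) μ := (hD.integrable n).bdd_mul hS_meas (hD.abs_sum_le n)
    have hexpand : (fun ω => (∑ k ∈ range (n + 1), D k ω) ^ 2) =
        fun ω => S ω ^ 2 + 2 * (S * D n) ω + D n ω ^ 2 := by
      ext ω
      simp only [hS, sum_range_succ, Pi.mul_apply]
      ring
    rw [hexpand, integral_add (f := fun ω => S ω ^ 2 + 2 * (S * D n) ω)
      (hS_sq.add (hSD.const_mul 2)) (hD.integrable_sq n), integral_add hS_sq (hSD.const_mul 2),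
      integral_const_mul,
      hD.integral_mul_eq_zero (hD.stronglyMeasurable_sum n) hSD, ih, sum_range_succ]
    ring

theorem integral_sq_sum_indicator [IsFiniteMeasure μ] (hD : IsBddMartingaleDiff ℱ μ D C)
    {G : ℕ → Set Ω} (hG : ∀ n, MeasurableSet[ℱ n] (G n)) (n : ℕ) :
    ∫ ω, (∑ k ∈ range n, (G k).indicator (D k) ω) ^ 2 ∂μ =
      ∑ k ∈ range n, ∫ ω, (G k).indicator (μ[fun ω => D k ω ^ 2 | ℱ k]) ω ∂μ := by
  rw [(hD.indicator hG).integral_sum_sq]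
  refine sum_congr rfl fun k _ => ?_
  have hsq : (fun ω => (G k).indicator (D k) ω ^ 2) = (G k).indicator (fun ω => D k ω ^ 2) := by
    ext ω
    by_cases h : ω ∈ G k <;> simp [h]
  rw [hsq, integral_indicator (ℱ.le k _ (hG k)), integral_indicator (ℱ.le k _ (hG k)),
    setIntegral_condExp (ℱ.le k) (hD.integrable_sq k) (hG k)]

theorem ae_tendsto_sum_of_sum_condExp_sq_le [IsFiniteMeasure μ]
    (hD : IsBddMartingaleDiff ℱ μ D C) {K : ℝ} (hK : 0 ≤ K) :
    ∀ᵐ ω ∂μ, (∀ n, ∑ k ∈ range n, μ[fun ω => D k ω ^ 2 | ℱ k] ω ≤ K) →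
      ∃ l, Tendsto (fun n => ∑ k ∈ range n, D k ω) atTop (𝓝 l) := by
  set w : ℕ → Ω → ℝ := fun k => μ[fun ω => D k ω ^ 2 | ℱ k]
  set G : ℕ → Set Ω := fun k => {ω | ∑ j ∈ range (k + 1), w j ω ≤ K}
  have hG : ∀ k, MeasurableSet[ℱ k] (G k) := fun k =>
    measurableSet_le (Finset.measurable_fun_sum _ fun j hj => (stronglyMeasurable_condExp.mono
      (ℱ.mono (Nat.lt_succ_iff.1 (mem_range.1 hj)))).measurable) measurable_const
  have hgated_le : ∀ᵐ ω ∂μ, ∀ n, ∑ k ∈ range n, (G k).indicator (w k) ω ≤ K := by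
    filter_upwards [ae_condExp_sq_nonneg ℱ D] with ω hw n
    simpa only [G, Set.indicator_apply, Set.mem_ofPred_eq] using sum_ite_sum_le_le hw hK n
  have hL2 : ∀ n, ∫ ω, (∑ k ∈ range n, (G k).indicator (D k) ω) ^ 2 ∂μ ≤ μ.real Set.univ * K := by
    intro n
    rw [hD.integral_sq_sum_indicator hG n,
      ← integral_finsetSum _ fun k _ => integrable_condExp.indicator (ℱ.le k _ (hG k))]
    calc ∫ ω, ∑ k ∈ range n, (G k).indicator (w k) ω ∂μ ≤ ∫ _, K ∂μ :=
          integral_mono_ae (integrable_finsetSum _ fun k _ =>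
            integrable_condExp.indicator (ℱ.le k _ (hG k))) (integrable_const K)
            (hgated_le.mono fun ω h => h n)
      _ = μ.real Set.univ * K := by simp
  have hgated := hD.indicator hG
  filter_upwards [hgated.martingale_sum.submartingale.exists_ae_tendsto_of_bdd
    fun n => eLpNorm_one_le_of_integral_sq_le (hgated.martingale_sum.integrable n)
      (hgated.integrable_sum_sq n) (hL2 n)] with ω ⟨l, hl⟩ hω
  exact ⟨l, hl.congr fun n => sum_congr rfl fun k _ =>
    Set.indicator_of_mem (show ω ∈ G k from hω (k + 1)) _⟩

theorem ae_summable_condExp_sq_of_abs_sum_le [IsFiniteMeasure μ]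
    (hD : IsBddMartingaleDiff ℱ μ D C) {K : ℝ} (hK : 0 ≤ K) :
    ∀ᵐ ω ∂μ, (∀ n, |∑ k ∈ range n, D k ω| ≤ K) →
      Summable (fun k => μ[fun ω => D k ω ^ 2 | ℱ k] ω) := by
  set w : ℕ → Ω → ℝ := fun k => μ[fun ω => D k ω ^ 2 | ℱ k]
  set G : ℕ → Set Ω := fun k => {ω | ∀ j ≤ k, |∑ i ∈ range j, D i ω| ≤ K}
  have hG : ∀ k, MeasurableSet[ℱ k] (G k) := by
    intro k
    simp only [G, Set.ofPred_forall]
    exact .iInter (m := ℱ k) fun j => .iInter (m := ℱ k) fun hj =>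
      ((hD.stronglyMeasurable_sum j).mono (ℱ.mono hj)).norm.measurableSet_le
        stronglyMeasurable_const
  have hgated_abs_le : ∀ᵐ ω ∂μ, ∀ n, |∑ k ∈ range n, (G k).indicator (D k) ω| ≤ K + C := by
    filter_upwards [ae_all_iff.2 hD.abs_le] with ω hω n
    simpa only [G, Set.indicator_apply, Set.mem_ofPred_eq] using abs_sum_ite_abs_sum_le_le hω hK n
  have hbound : ∀ n, ∑ k ∈ range n, ∫ ω, (G k).indicator (w k) ω ∂μ ≤
      μ.real Set.univ * (K + C) ^ 2 := by
    intro n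
    rw [← hD.integral_sq_sum_indicator hG n]
    calc ∫ ω, (∑ k ∈ range n, (G k).indicator (D k) ω) ^ 2 ∂μ ≤ ∫ _, (K + C) ^ 2 ∂μ :=
          integral_mono_ae ((hD.indicator hG).integrable_sum_sq n) (integrable_const _)
            (hgated_abs_le.mono fun ω h => sq_le_sq.2 ((h n).trans (le_abs_self _)))
      _ = μ.real Set.univ * (K + C) ^ 2 := by simp
  have hw_nonneg : ∀ k, 0 ≤ᵐ[μ] (G k).indicator (w k) := fun k =>
    (ae_condExp_sq_nonneg ℱ D).mono fun ω hω => Set.indicator_nonneg (fun _ _ => hω k) ω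
  filter_upwards [ae_summable_of_sum_integral_le
    (fun k => integrable_condExp.indicator (ℱ.le k _ (hG k))) hw_nonneg hbound] with ω hsum hω
  exact hsum.congr fun k => Set.indicator_of_mem (show ω ∈ G k from fun j _ => hω j) _

theorem ae_tendsto_sum_of_summable_condExp_sq [IsFiniteMeasure μ]
    (hD : IsBddMartingaleDiff ℱ μ D C) :
    ∀ᵐ ω ∂μ, Summable (fun k => μ[fun ω => D k ω ^ 2 | ℱ k] ω) →
      ∃ l, Tendsto (fun n => ∑ k ∈ range n, D k ω) atTop (𝓝 l) := by
  filter_upwards [ae_all_iff.2 fun K : ℕ => hD.ae_tendsto_sum_of_sum_condExp_sq_le K.cast_nonneg,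
    ae_condExp_sq_nonneg ℱ D] with ω h hw hsum
  exact h ⌈∑' k, μ[fun ω => D k ω ^ 2 | ℱ k] ω⌉₊ fun n =>
    (hsum.sum_le_tsum _ fun k _ => hw k).trans (Nat.le_ceil _)

theorem ae_summable_condExp_sq_of_tendsto_sum [IsFiniteMeasure μ]
    (hD : IsBddMartingaleDiff ℱ μ D C) :
    ∀ᵐ ω ∂μ, (∃ l, Tendsto (fun n => ∑ k ∈ range n, D k ω) atTop (𝓝 l)) →
      Summable (fun k => μ[fun ω => D k ω ^ 2 | ℱ k] ω) := by
  filter_upwards [ae_all_iff.2 fun K : ℕ =>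
    hD.ae_summable_condExp_sq_of_abs_sum_le K.cast_nonneg] with ω h ⟨l, hl⟩
  obtain ⟨M, hM⟩ := hl.abs.bddAbove_range
  exact h ⌈M⌉₊ fun n => (hM ⟨n, rfl⟩).trans (Nat.le_ceil M)

end IsBddMartingaleDiff

end

theorem stmt_8_general {Ω : Type*} {m0 : MeasurableSpace Ω} (μ : Measure Ω) [IsProbabilityMeasure μ]
    (ℱ : Filtration ℕ m0) (X : ℕ → Ω → ℝ) (C : ℝ)
    (hadapted : ∀ n, StronglyMeasurable[ℱ (n + 1)] (X (n + 1)))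
    (hbdd : ∀ n, ∀ᵐ ω ∂μ, |X (n + 1) ω| ≤ C)
    (hmean : ∀ n, μ[X (n + 1) | ℱ n] =ᵐ[μ] 0)
    (v : ℕ → Ω → ℝ)
    (hv : ∀ n, v (n + 1) =ᵐ[μ] μ[fun ω => (X (n + 1) ω) ^ 2 | ℱ n]) :
    ∀ᵐ ω ∂μ, (Summable (fun n => v (n + 1) ω) ↔
      ∃ l : ℝ, Tendsto (fun n => ∑ k ∈ Finset.range n, X (k + 1) ω) atTop (nhds l)) := by
  have hX : IsBddMartingaleDiff ℱ μ (fun n => X (n + 1)) C := ⟨hadapted, hbdd, hmean⟩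
  filter_upwards [hX.ae_tendsto_sum_of_summable_condExp_sq,
    hX.ae_summable_condExp_sq_of_tendsto_sum, ae_all_iff.2 hv] with ω hconv hsum hvω
  rw [show (fun n => v (n + 1) ω) = _ from funext hvω]
  exact ⟨hconv, hsum⟩

theorem stmt_8 {Ω : Type*} {m0 : MeasurableSpace Ω} (μ : Measure Ω) [IsProbabilityMeasure μ]
    (ℱ : Filtration ℕ m0) (X : ℕ → Ω → ℝ) (C : ℝ) (hC : 0 < C)
    (hadapted : ∀ n, StronglyMeasurable[ℱ (n + 1)] (X (n + 1)))
    (hbdd : ∀ n, ∀ᵐ ω ∂μ, |X (n + 1) ω| ≤ C)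
    (hmean : ∀ n, μ[X (n + 1) | ℱ n] =ᵐ[μ] 0)
    (v : ℕ → Ω → ℝ)
    (hv : ∀ n, v (n + 1) =ᵐ[μ] μ[fun ω => (X (n + 1) ω) ^ 2 | ℱ n]) :
    ∀ᵐ ω ∂μ, (Summable (fun n => v (n + 1) ω) ↔
      ∃ l : ℝ, Tendsto (fun n => ∑ k ∈ Finset.range n, X (k + 1) ω) atTop (nhds l)) :=
  stmt_8_general μ ℱ X C hadapted hbdd hmean v hv
end

section
/- (Lévy's extension of the Borel–Cantelli lemma, convergence direction) Let (X_n) be a sequence of {0,1}-valued random variables adapted to a filtration (ℱ_n), and let p_n = E[X_n | ℱ_{n-1}]. Then almost surely, ∑_n p_n < ∞ implies ∑_n X_n < ∞. -/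
open Filter MeasureTheory

theorem stmt_9 {Ω : Type*} {m0 : MeasurableSpace Ω} (μ : Measure Ω) [IsProbabilityMeasure μ]
    (ℱ : Filtration ℕ m0) (X : ℕ → Ω → ℝ)
    (hadapted : ∀ n, StronglyMeasurable[ℱ (n + 1)] (X (n + 1)))
    (h01 : ∀ n ω, X (n + 1) ω = 0 ∨ X (n + 1) ω = 1)
    (p : ℕ → Ω → ℝ)
    (hp : ∀ n, p (n + 1) =ᵐ[μ] μ[X (n + 1) | ℱ n]) :
    ∀ᵐ ω ∂μ, Summable (fun n => p (n + 1) ω) → Summable (fun n => X (n + 1) ω) := by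
  set s : ℕ → Set Ω := fun n => Nat.rec ∅ (fun k _ => X (k + 1) ⁻¹' {1}) n with hs_def
  have hs : ∀ n, MeasurableSet[ℱ n] (s n) := by
    rintro (_ | n)
    · exact @MeasurableSet.empty _ (ℱ 0)
    · exact (hadapted n).measurable (measurableSet_singleton 1)
  have hind : ∀ k ω, (s (k + 1)).indicator (1 : Ω → ℝ) ω = X (k + 1) ω := by
    intro k ω
    rcases h01 k ω with h | h <;>
      simp [hs_def, Set.indicator_apply, Set.mem_preimage, h]
  have hcond : ∀ k, (μ[(s (k + 1)).indicator (1 : Ω → ℝ)|ℱ k]) =ᵐ[μ] p (k + 1) := by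
    intro k
    have : (s (k + 1)).indicator (1 : Ω → ℝ) = X (k + 1) := funext (hind k)
    rw [this]
    exact (hp k).symm
  have key := tendsto_sum_indicator_atTop_iff' (μ := μ) hs
  have hXnn : ∀ k ω, 0 ≤ X (k + 1) ω := fun k ω => by
    rcases h01 k ω with h | h <;> simp [h]
  have hpnn : ∀ᵐ ω ∂μ, ∀ k, 0 ≤ p (k + 1) ω := by
    rw [ae_all_iff]
    intro k
    filter_upwards [hp k, condExp_nonneg (μ := μ) (m := ℱ k)
      (Eventually.of_forall (hXnn k))] with ω h1 h2
    rw [h1]; exact h2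
  have hcond' : ∀ᵐ ω ∂μ, ∀ k, (μ[(s (k + 1)).indicator (1 : Ω → ℝ)|ℱ k]) ω = p (k + 1) ω :=
    ae_all_iff.2 hcond
  filter_upwards [key, hpnn, hcond'] with ω hkey hpnn' hcond'' hpsum
  rw [summable_iff_not_tendsto_nat_atTop_of_nonneg (hXnn · ω)]
  intro hT
  have hT' : Tendsto (fun n => ∑ k ∈ Finset.range n, p (k + 1) ω) atTop atTop := by
    have := hkey.1 (by simpa only [hind] using hT)
    simpa only [hcond''] using this
  exact (summable_iff_not_tendsto_nat_atTop_of_nonneg (hpnn' ·)).1 hpsum hT'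
end

section
/- (Lévy's extension of the Borel–Cantelli lemma, divergence direction) Let (X_n) be a sequence of {0,1}-valued random variables adapted to a filtration (ℱ_n) with p_n = E[X_n | ℱ_{n-1}]. Then almost surely, ∑_n p_n = ∞ implies (∑_{k≤n} X_k)/(∑_{k≤n} p_k) → 1. -/
/-!
Let `q k` be a `[0,1]`-valued version of `p (k + 1)` and `A n = 1 + ∑_{k<n} q k`
(`levyNormalizer`). Since `E[(X_{k+1} - q_k)² | ℱ_k] ≤ 2 q_k` and
`q_k / A_{k+1}² ≤ 1 / A_k - 1 / A_{k+1}`, the martingale `M n = ∑_{k<n} (X_{k+1} - q_k) / A_{k+1}`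
(`levyMartingale`) is bounded in `L²`, hence converges almost surely. On the event `A n → ∞`,
Kronecker's lemma turns this into `(∑_{k<n} (X_{k+1} - q_k)) / A n → 0`, which is the claim.
-/

open Filter MeasureTheory Finset Topology Asymptotics

theorem tendsto_sum_range_sub_mul_div {b s : ℕ → ℝ} {L : ℝ} (hbm : Monotone b)
    (hbt : Tendsto b atTop atTop) (hs : Tendsto s atTop (𝓝 L)) :
    Tendsto (fun n => (∑ k ∈ range n, (b (k + 1) - b k) * s k) / b n) atTop (𝓝 L) := by
  have htel : ∀ n, ∑ k ∈ range n, (b (k + 1) - b k) = b n - b 0 := sum_range_sub b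
  have hsmall : (fun k => (b (k + 1) - b k) * (s k - L)) =o[atTop] fun k => b (k + 1) - b k := by
    simpa [mul_comm] using
      ((isLittleO_one_iff ℝ).2 (tendsto_sub_nhds_zero_iff.2 hs)).mul_isBigO
        (isBigO_refl (fun k => b (k + 1) - b k) atTop)
  have hsum := hsmall.sum_range (fun k => sub_nonneg.2 (hbm k.le_succ))
    (by simpa only [htel, ← sub_eq_add_neg] using tendsto_atTop_add_const_right _ (-b 0) hbt)
  simp only [htel] at hsum
  have hb0 : (fun n => b n - b 0) =O[atTop] b :=
    (isBigO_refl b atTop).sub ((isLittleO_const_id_atTop (b 0)).comp_tendsto hbt).isBigO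
  have herr := (hsum.trans_isBigO hb0).tendsto_div_nhds_zero
  have hmain : Tendsto (fun n => L * (1 - b 0 / b n)) atTop (𝓝 (L * (1 - 0))) :=
    tendsto_const_nhds.mul (tendsto_const_nhds.sub (tendsto_const_nhds.div_atTop hbt))
  rw [sub_zero, mul_one] at hmain
  refine (by simpa using herr.add hmain : Tendsto _ atTop (𝓝 L)).congr' ?_
  filter_upwards [hbt.eventually_gt_atTop 0] with n hn
  have hsplit : ∑ k ∈ range n, (b (k + 1) - b k) * s k
      = ∑ k ∈ range n, (b (k + 1) - b k) * (s k - L) + L * (b n - b 0) := by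
    rw [← htel, mul_sum, ← sum_add_distrib]
    exact sum_congr rfl fun k _ => by ring
  rw [hsplit]
  field_simp

/-- Kronecker's lemma. -/
theorem tendsto_sum_range_succ_div_of_tendsto_sum_div {u b : ℕ → ℝ} {L : ℝ}
    (hb : ∀ n, 0 < b n) (hbm : Monotone b) (hbt : Tendsto b atTop atTop)
    (hs : Tendsto (fun n => ∑ k ∈ range n, u k / b k) atTop (𝓝 L)) :
    Tendsto (fun n => (∑ k ∈ range (n + 1), u k) / b n) atTop (𝓝 0) := by
  set s := fun n => ∑ k ∈ range n, u k / b k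
  have habel : ∀ n, ∑ k ∈ range (n + 1), u k
      = b n * s (n + 1) - ∑ k ∈ range n, (b (k + 1) - b k) * s (k + 1) := by
    intro n
    have := sum_range_by_parts b (fun k => u k / b k) (n + 1)
    simp only [smul_eq_mul, add_tsub_cancel_right] at this
    rw [← this]
    exact sum_congr rfl fun k _ => by field_simp [(hb k).ne']
  have hlim := ((tendsto_add_atTop_iff_nat 1).2 hs).sub
    (tendsto_sum_range_sub_mul_div hbm hbt ((tendsto_add_atTop_iff_nat 1).2 hs))
  rw [sub_self] at hlim
  refine hlim.congr fun n => ?_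
  rw [habel, sub_div, mul_div_cancel_left₀ _ (hb n).ne']

theorem sq_inv_add_mul_sub_le {x q a : ℝ} (hx : x ∈ Set.Icc (0 : ℝ) 1)
    (hq : q ∈ Set.Icc (0 : ℝ) 1) (ha : 1 ≤ a) :
    ((a + q)⁻¹ * (x - q)) ^ 2 ≤ (a + q)⁻¹ ^ 2 * (x - q) + 2 * (a⁻¹ - (a + q)⁻¹) := by
  obtain ⟨hx0, hx1⟩ := hx
  obtain ⟨hq0, hq1⟩ := hq
  have hsq : (x - q) ^ 2 ≤ (x - q) + 2 * q := by nlinarith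
  have htel : a⁻¹ - (a + q)⁻¹ = q * (a⁻¹ * (a + q)⁻¹) := by field_simp; ring
  have hinv : (a + q)⁻¹ ≤ a⁻¹ := inv_anti₀ (by linarith) (by linarith)
  calc ((a + q)⁻¹ * (x - q)) ^ 2 = (a + q)⁻¹ ^ 2 * (x - q) ^ 2 := by ring
    _ ≤ (a + q)⁻¹ ^ 2 * ((x - q) + 2 * q) := by gcongr
    _ = (a + q)⁻¹ ^ 2 * (x - q) + 2 * (q * ((a + q)⁻¹ * (a + q)⁻¹)) := by ring
    _ ≤ (a + q)⁻¹ ^ 2 * (x - q) + 2 * (a⁻¹ - (a + q)⁻¹) := by rw [htel]; gcongr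

theorem tendsto_sum_div_sum_of_tendsto_sum_sub_div {x q : ℕ → ℝ} (hq : ∀ n, 0 ≤ q n)
    (hS : Tendsto (fun n => ∑ k ∈ range n, q k) atTop atTop)
    (hM : ∃ c, Tendsto (fun n => ∑ k ∈ range n, (1 + ∑ j ∈ range (k + 1), q j)⁻¹ * (x k - q k))
      atTop (𝓝 c)) :
    Tendsto (fun n => (∑ k ∈ range n, x k) / ∑ k ∈ range n, q k) atTop (𝓝 1) := by
  obtain ⟨c, hc⟩ := hM
  set S := fun n => ∑ k ∈ range n, q k
  have hSnonneg : ∀ n, 0 ≤ S n := fun n => sum_nonneg fun k _ => hq k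
  have hkron := tendsto_sum_range_succ_div_of_tendsto_sum_div (u := fun k => x k - q k)
    (b := fun n => 1 + S (n + 1)) (fun n => by linarith [hSnonneg (n + 1)])
    (monotone_nat_of_le_succ fun n => by simpa [S, sum_range_succ _ (n + 1)] using hq (n + 1))
    (tendsto_atTop_add_const_left _ 1 (hS.comp (tendsto_add_atTop_nat 1)))
    (by simpa only [div_eq_inv_mul] using hc)
  have hdev : Tendsto (fun n => (∑ k ∈ range n, x k - S n) / (1 + S n)) atTop (𝓝 0) := by
    rw [← tendsto_add_atTop_iff_nat 1]
    simpa only [sum_sub_distrib] using hkron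
  have hratio : Tendsto (fun n => 1 + (S n)⁻¹) atTop (𝓝 (1 + 0)) :=
    tendsto_const_nhds.add hS.inv_tendsto_atTop
  rw [add_zero] at hratio
  have hlim : Tendsto (fun n => 1 + (∑ k ∈ range n, x k - S n) / (1 + S n) * (1 + (S n)⁻¹))
      atTop (𝓝 1) := by
    simpa using tendsto_const_nhds.add (hdev.mul hratio)
  refine hlim.congr' ?_
  filter_upwards [hS.eventually_gt_atTop 0] with n hn
  change _ = _ / S n
  field_simp
  ring

section Probability

variable {Ω : Type*} {m m0 : MeasurableSpace Ω} {μ : Measure Ω} {ℱ : Filtration ℕ m0}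

theorem integrable_of_mem_Icc [IsFiniteMeasure μ] {f : Ω → ℝ} (hf : StronglyMeasurable f)
    (hf01 : ∀ ω, f ω ∈ Set.Icc (0 : ℝ) 1) : Integrable f μ :=
  .of_bound hf.aestronglyMeasurable 1 (ae_of_all _ fun ω => by
    rw [Real.norm_of_nonneg (hf01 ω).1]; exact (hf01 ω).2)

theorem integral_mul_eq_zero_of_condExp_eq_zero [IsFiniteMeasure μ] (hm : m ≤ m0) {c Y : Ω → ℝ}
    (hc : StronglyMeasurable[m] c) (hcY : Integrable (c * Y) μ) (hY : Integrable Y μ)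
    (hY0 : μ[Y | m] =ᵐ[μ] 0) : ∫ ω, c ω * Y ω ∂μ = 0 := by
  rw [← integral_zero Ω ℝ, ← Pi.mul_def, ← integral_condExp hm]
  refine integral_congr_ae ?_
  filter_upwards [condExp_mul_of_stronglyMeasurable_left hc hcY hY, hY0] with ω h h0
  simp [h, h0]

theorem martingale_sum_mul_of_condExp_eq_zero [IsFiniteMeasure μ] {c Y : ℕ → Ω → ℝ} {C : ℝ}
    (hc : ∀ n, StronglyMeasurable[ℱ n] (c n)) (hcC : ∀ n ω, |c n ω| ≤ C)
    (hY : ∀ n, StronglyMeasurable[ℱ (n + 1)] (Y n)) (hYint : ∀ n, Integrable (Y n) μ)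
    (hY0 : ∀ n, μ[Y n | ℱ n] =ᵐ[μ] 0) :
    Martingale (fun n ω => ∑ k ∈ range n, c k ω * Y k ω) ℱ μ := by
  have hint : ∀ n, Integrable (c n * Y n) μ := fun n =>
    (hYint n).bdd_mul ((hc n).mono (ℱ.le n)).aestronglyMeasurable (ae_of_all _ (hcC n))
  refine martingale_of_condExp_sub_eq_zero_nat (fun n => ?_) (fun n => ?_) fun n => ?_
  · refine Finset.stronglyMeasurable_fun_sum _ fun k hk => ?_
    have hk : k + 1 ≤ n := mem_range.1 hk
    exact ((hc k).mono (ℱ.mono (by omega))).mul ((hY k).mono (ℱ.mono hk))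
  · exact integrable_finsetSum _ fun k _ => hint k
  · have hinc : (fun ω => ∑ k ∈ range (n + 1), c k ω * Y k ω)
        - (fun ω => ∑ k ∈ range n, c k ω * Y k ω) = c n * Y n := by
      ext ω; simp [sum_range_succ]
    rw [hinc]
    filter_upwards [condExp_mul_of_stronglyMeasurable_left (hc n) (hint n) (hYint n), hY0 n]
      with ω h h0
    simp [h, h0]

theorem MeasureTheory.Martingale.condExp_succ_sub_eq_zero [IsFiniteMeasure μ] {f : ℕ → Ω → ℝ}
    (hf : Martingale f ℱ μ) (n : ℕ) : μ[f (n + 1) - f n | ℱ n] =ᵐ[μ] 0 := by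
  filter_upwards [condExp_sub (hf.integrable (n + 1)) (hf.integrable n) (ℱ n),
    hf.condExp_ae_eq n.le_succ] with ω h h'
  simp [h, h', condExp_of_stronglyMeasurable (ℱ.le n) (hf.stronglyAdapted n) (hf.integrable n)]

theorem MeasureTheory.Martingale.integral_sq_succ [IsFiniteMeasure μ] {f : ℕ → Ω → ℝ}
    (hf : Martingale f ℱ μ) (hf2 : ∀ n, MemLp (f n) 2 μ) (n : ℕ) :
    ∫ ω, f (n + 1) ω ^ 2 ∂μ = ∫ ω, f n ω ^ 2 ∂μ + ∫ ω, (f (n + 1) ω - f n ω) ^ 2 ∂μ := by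
  have hinc := (hf2 (n + 1)).sub (hf2 n)
  have hcross := (hf2 n).integrable_mul hinc
  have horth : ∫ ω, f n ω * (f (n + 1) ω - f n ω) ∂μ = 0 :=
    integral_mul_eq_zero_of_condExp_eq_zero (ℱ.le n) (hf.stronglyAdapted n) hcross
      (hinc.integrable one_le_two) (hf.condExp_succ_sub_eq_zero n)
  calc ∫ ω, f (n + 1) ω ^ 2 ∂μ
      = ∫ ω, (f n ω ^ 2 + (f (n + 1) ω - f n ω) ^ 2
          + 2 * (f n ω * (f (n + 1) ω - f n ω))) ∂μ := by
        congr 1; ext ω; ring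
    _ = ∫ ω, f n ω ^ 2 ∂μ + ∫ ω, (f (n + 1) ω - f n ω) ^ 2 ∂μ := by
        rw [integral_add, integral_add, integral_const_mul, horth, mul_zero, add_zero]
        exacts [(hf2 n).integrable_sq, hinc.integrable_sq,
          (hf2 n).integrable_sq.add hinc.integrable_sq, hcross.const_mul 2]

theorem MeasureTheory.Martingale.exists_ae_tendsto_of_integral_sq_le [IsProbabilityMeasure μ]
    {f : ℕ → Ω → ℝ} (hf : Martingale f ℱ μ) (hf2 : ∀ n, MemLp (f n) 2 μ) {C : ℝ}
    (hC : ∀ n, ∫ ω, f n ω ^ 2 ∂μ ≤ C) :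
    ∀ᵐ ω ∂μ, ∃ c, Tendsto (fun n => f n ω) atTop (𝓝 c) := by
  refine hf.submartingale.exists_ae_tendsto_of_bdd (R := ((1 + C) / 2).toNNReal) fun n => ?_
  have hL1 : ∫ ω, ‖f n ω‖ ∂μ ≤ (1 + C) / 2 := calc
    ∫ ω, ‖f n ω‖ ∂μ ≤ ∫ ω, (1 + f n ω ^ 2) / 2 ∂μ :=
      integral_mono (hf.integrable n).norm
        (((integrable_const 1).add (hf2 n).integrable_sq).div_const 2)
        fun ω => by nlinarith [sq_abs (f n ω), sq_nonneg (|f n ω| - 1), Real.norm_eq_abs (f n ω)]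
    _ ≤ (1 + C) / 2 := by
      rw [integral_div, integral_add (integrable_const 1) (hf2 n).integrable_sq]
      simp only [integral_const, probReal_univ, smul_eq_mul, mul_one]
      linarith [hC n]
  rw [eLpNorm_one_eq_lintegral_enorm, ← ofReal_integral_norm_eq_lintegral_enorm (hf.integrable n)]
  exact ENNReal.ofReal_le_ofReal hL1

/-- Clamping makes `0 ≤ clampedCondExp μ m f ≤ 1` hold everywhere, so the pathwise bounds below
need no exceptional null sets. -/
noncomputable def clampedCondExp (μ : Measure Ω) (m : MeasurableSpace Ω) (f : Ω → ℝ) (ω : Ω) :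
    ℝ :=
  max 0 (min 1 (μ[f | m] ω))

theorem clampedCondExp_mem_Icc (f : Ω → ℝ) (ω : Ω) : clampedCondExp μ m f ω ∈ Set.Icc 0 1 :=
  ⟨le_max_left _ _, max_le zero_le_one (min_le_left _ _)⟩

theorem stronglyMeasurable_clampedCondExp (f : Ω → ℝ) :
    StronglyMeasurable[m] (clampedCondExp μ m f) :=
  (measurable_const.max
    (measurable_const.min stronglyMeasurable_condExp.measurable)).stronglyMeasurable

theorem integrable_clampedCondExp [IsFiniteMeasure μ] (hm : m ≤ m0) (f : Ω → ℝ) :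
    Integrable (clampedCondExp μ m f) μ :=
  integrable_of_mem_Icc ((stronglyMeasurable_clampedCondExp f).mono hm) (clampedCondExp_mem_Icc f)

theorem clampedCondExp_ae_eq [IsFiniteMeasure μ] (hm : m ≤ m0) {f : Ω → ℝ} (hf : Integrable f μ)
    (hf01 : ∀ᵐ ω ∂μ, f ω ∈ Set.Icc 0 1) : clampedCondExp μ m f =ᵐ[μ] μ[f | m] := by
  have h0 : 0 ≤ᵐ[μ] μ[f | m] := condExp_nonneg (hf01.mono fun ω h => h.1)
  have h1 : μ[f | m] ≤ᵐ[μ] fun _ => (1 : ℝ) := by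
    simpa [condExp_const hm] using
      condExp_mono (m := m) hf (integrable_const (1 : ℝ)) (hf01.mono fun ω h => h.2)
  filter_upwards [h0, h1] with ω h0 h1
  rw [clampedCondExp, min_eq_right h1]
  exact max_eq_right h0

theorem condExp_sub_clampedCondExp [IsFiniteMeasure μ] (hm : m ≤ m0) {f : Ω → ℝ}
    (hf : Integrable f μ) (hf01 : ∀ᵐ ω ∂μ, f ω ∈ Set.Icc 0 1) :
    μ[f - clampedCondExp μ m f | m] =ᵐ[μ] 0 := by
  filter_upwards [condExp_sub hf (integrable_clampedCondExp hm f) m,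
    clampedCondExp_ae_eq hm hf hf01] with ω h h'
  rw [h, Pi.sub_apply, condExp_of_stronglyMeasurable hm (stronglyMeasurable_clampedCondExp f)
    (integrable_clampedCondExp hm f), h', sub_self, Pi.zero_apply]

variable {X : ℕ → Ω → ℝ}

noncomputable def levyNormalizer (μ : Measure Ω) (ℱ : Filtration ℕ m0) (X : ℕ → Ω → ℝ) (n : ℕ)
    (ω : Ω) : ℝ :=
  1 + ∑ k ∈ range n, clampedCondExp μ (ℱ k) (X (k + 1)) ω

noncomputable def levyMartingale (μ : Measure Ω) (ℱ : Filtration ℕ m0) (X : ℕ → Ω → ℝ) (n : ℕ)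
    (ω : Ω) : ℝ :=
  ∑ k ∈ range n,
    (levyNormalizer μ ℱ X (k + 1) ω)⁻¹ * (X (k + 1) ω - clampedCondExp μ (ℱ k) (X (k + 1)) ω)

theorem one_le_levyNormalizer (n : ℕ) (ω : Ω) : 1 ≤ levyNormalizer μ ℱ X n ω :=
  le_add_of_nonneg_right (sum_nonneg fun _ _ => (clampedCondExp_mem_Icc _ ω).1)

theorem inv_levyNormalizer_mem_Icc (n : ℕ) (ω : Ω) :
    (levyNormalizer μ ℱ X n ω)⁻¹ ∈ Set.Icc (0 : ℝ) 1 :=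
  ⟨inv_nonneg.2 (zero_le_one.trans (one_le_levyNormalizer n ω)),
    inv_le_one_of_one_le₀ (one_le_levyNormalizer n ω)⟩

theorem levyNormalizer_succ (n : ℕ) (ω : Ω) :
    levyNormalizer μ ℱ X (n + 1) ω
      = levyNormalizer μ ℱ X n ω + clampedCondExp μ (ℱ n) (X (n + 1)) ω := by
  simp only [levyNormalizer, sum_range_succ, add_assoc]

theorem stronglyMeasurable_levyNormalizer {n i : ℕ} (hn : n ≤ i + 1) :
    StronglyMeasurable[ℱ i] (levyNormalizer μ ℱ X n) := by
  refine stronglyMeasurable_const.add (Finset.stronglyMeasurable_fun_sum _ fun k hk => ?_)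
  exact (stronglyMeasurable_clampedCondExp _).mono (ℱ.mono (by simp at hk; omega))

theorem integrable_inv_levyNormalizer [IsFiniteMeasure μ] (n : ℕ) :
    Integrable (fun ω => (levyNormalizer μ ℱ X n ω)⁻¹) μ :=
  integrable_of_mem_Icc
    ((stronglyMeasurable_levyNormalizer n.le_succ).mono (ℱ.le n)).measurable.inv.stronglyMeasurable
    (inv_levyNormalizer_mem_Icc n)

theorem levyMartingale_succ_sub (n : ℕ) (ω : Ω) :
    levyMartingale μ ℱ X (n + 1) ω - levyMartingale μ ℱ X n ω
      = (levyNormalizer μ ℱ X (n + 1) ω)⁻¹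
        * (X (n + 1) ω - clampedCondExp μ (ℱ n) (X (n + 1)) ω) := by
  simp [levyMartingale, sum_range_succ]

theorem abs_levyMartingale_le (hX01 : ∀ n ω, X (n + 1) ω ∈ Set.Icc (0 : ℝ) 1) (n : ℕ)
    (ω : Ω) : |levyMartingale μ ℱ X n ω| ≤ n := by
  rw [levyMartingale]
  refine (abs_sum_le_sum_abs _ _).trans
    ((sum_le_sum (g := fun _ => 1) fun k _ => ?_).trans_eq (by simp))
  have hc := inv_levyNormalizer_mem_Icc (μ := μ) (ℱ := ℱ) (X := X) (k + 1) ω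
  have hq := clampedCondExp_mem_Icc (μ := μ) (m := ℱ k) (X (k + 1)) ω
  rw [abs_mul, abs_of_nonneg hc.1]
  refine mul_le_one₀ hc.2 (abs_nonneg _) (abs_le.2 ⟨?_, ?_⟩) <;>
    linarith [(hX01 k ω).1, (hX01 k ω).2, hq.1, hq.2]

theorem martingale_levyMartingale [IsFiniteMeasure μ]
    (hX : ∀ n, StronglyMeasurable[ℱ (n + 1)] (X (n + 1)))
    (hX01 : ∀ n ω, X (n + 1) ω ∈ Set.Icc (0 : ℝ) 1) : Martingale (levyMartingale μ ℱ X) ℱ μ := by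
  have hXint : ∀ n, Integrable (X (n + 1)) μ := fun n =>
    integrable_of_mem_Icc ((hX n).mono (ℱ.le _)) (hX01 n)
  exact martingale_sum_mul_of_condExp_eq_zero (C := 1)
    (c := fun n ω => (levyNormalizer μ ℱ X (n + 1) ω)⁻¹)
    (Y := fun n => X (n + 1) - clampedCondExp μ (ℱ n) (X (n + 1)))
    (fun n => (stronglyMeasurable_levyNormalizer le_rfl).measurable.inv.stronglyMeasurable)
    (fun n ω => (abs_of_nonneg (inv_levyNormalizer_mem_Icc _ ω).1).trans_le
      (inv_levyNormalizer_mem_Icc _ ω).2)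
    (fun n => (hX n).sub ((stronglyMeasurable_clampedCondExp _).mono (ℱ.mono n.le_succ)))
    (fun n => (hXint n).sub (integrable_clampedCondExp (ℱ.le n) _))
    (fun n => condExp_sub_clampedCondExp (ℱ.le n) (hXint n) (ae_of_all _ (hX01 n)))

theorem memLp_levyMartingale [IsFiniteMeasure μ]
    (hX : ∀ n, StronglyMeasurable[ℱ (n + 1)] (X (n + 1)))
    (hX01 : ∀ n ω, X (n + 1) ω ∈ Set.Icc (0 : ℝ) 1) (n : ℕ) :
    MemLp (levyMartingale μ ℱ X n) 2 μ :=
  .of_bound (((martingale_levyMartingale hX hX01).stronglyAdapted n).mono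
    (ℱ.le n)).aestronglyMeasurable n (ae_of_all _ fun ω => abs_levyMartingale_le hX01 n ω)

theorem integral_sq_levyMartingale_succ_sub_le [IsFiniteMeasure μ]
    (hX : ∀ n, StronglyMeasurable[ℱ (n + 1)] (X (n + 1)))
    (hX01 : ∀ n ω, X (n + 1) ω ∈ Set.Icc (0 : ℝ) 1) (n : ℕ) :
    ∫ ω, (levyMartingale μ ℱ X (n + 1) ω - levyMartingale μ ℱ X n ω) ^ 2 ∂μ
      ≤ 2 * (∫ ω, (levyNormalizer μ ℱ X n ω)⁻¹ ∂μ
        - ∫ ω, (levyNormalizer μ ℱ X (n + 1) ω)⁻¹ ∂μ) := by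
  set q := clampedCondExp μ (ℱ n) (X (n + 1))
  set c := fun ω => (levyNormalizer μ ℱ X (n + 1) ω)⁻¹ ^ 2
  have hXint := integrable_of_mem_Icc (μ := μ) ((hX n).mono (ℱ.le _)) (hX01 n)
  have hYint := hXint.sub (integrable_clampedCondExp (ℱ.le n) (X (n + 1)))
  have hc : StronglyMeasurable[ℱ n] c :=
    ((stronglyMeasurable_levyNormalizer le_rfl).measurable.inv.pow_const 2).stronglyMeasurable
  have hcY : Integrable (fun ω => c ω * (X (n + 1) - q) ω) μ :=
    hYint.bdd_mul (hc.mono (ℱ.le n)).aestronglyMeasurable (ae_of_all _ fun ω => by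
      have := inv_levyNormalizer_mem_Icc (μ := μ) (ℱ := ℱ) (X := X) (n + 1) ω
      rw [Real.norm_of_nonneg (by positivity)]
      exact pow_le_one₀ this.1 this.2)
  have horth : ∫ ω, c ω * (X (n + 1) - q) ω ∂μ = 0 :=
    integral_mul_eq_zero_of_condExp_eq_zero (ℱ.le n) hc hcY hYint
      (condExp_sub_clampedCondExp (ℱ.le n) hXint (ae_of_all _ (hX01 n)))
  have hdiff : Integrable (fun ω => (levyNormalizer μ ℱ X n ω)⁻¹
      - (levyNormalizer μ ℱ X (n + 1) ω)⁻¹) μ :=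
    (integrable_inv_levyNormalizer n).sub (integrable_inv_levyNormalizer (n + 1))
  calc ∫ ω, (levyMartingale μ ℱ X (n + 1) ω - levyMartingale μ ℱ X n ω) ^ 2 ∂μ
      ≤ ∫ ω, (c ω * (X (n + 1) - q) ω + 2 * ((levyNormalizer μ ℱ X n ω)⁻¹
          - (levyNormalizer μ ℱ X (n + 1) ω)⁻¹)) ∂μ := by
        refine integral_mono_of_nonneg (ae_of_all _ fun ω => sq_nonneg _)
          (hcY.add (hdiff.const_mul 2)) (ae_of_all _ fun ω => ?_)
        simp only [c, q, Pi.sub_apply]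
        rw [levyMartingale_succ_sub, levyNormalizer_succ]
        exact sq_inv_add_mul_sub_le (hX01 n ω) (clampedCondExp_mem_Icc _ ω)
          (one_le_levyNormalizer n ω)
    _ = _ := by
        rw [integral_add hcY (hdiff.const_mul 2), horth, zero_add, integral_const_mul,
          integral_sub (integrable_inv_levyNormalizer n) (integrable_inv_levyNormalizer (n + 1))]

theorem integral_sq_levyMartingale_le [IsFiniteMeasure μ]
    (hX : ∀ n, StronglyMeasurable[ℱ (n + 1)] (X (n + 1)))
    (hX01 : ∀ n ω, X (n + 1) ω ∈ Set.Icc (0 : ℝ) 1) (n : ℕ) :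
    ∫ ω, levyMartingale μ ℱ X n ω ^ 2 ∂μ
      ≤ 2 * (μ.real Set.univ - ∫ ω, (levyNormalizer μ ℱ X n ω)⁻¹ ∂μ) := by
  induction n with
  | zero => simp [levyMartingale, levyNormalizer]
  | succ n ih =>
    rw [(martingale_levyMartingale (μ := μ) hX hX01).integral_sq_succ
      (memLp_levyMartingale hX hX01) n]
    linarith [integral_sq_levyMartingale_succ_sub_le (μ := μ) hX hX01 n]

theorem ae_exists_tendsto_levyMartingale [IsProbabilityMeasure μ]
    (hX : ∀ n, StronglyMeasurable[ℱ (n + 1)] (X (n + 1)))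
    (hX01 : ∀ n ω, X (n + 1) ω ∈ Set.Icc (0 : ℝ) 1) :
    ∀ᵐ ω ∂μ, ∃ c, Tendsto (fun n => levyMartingale μ ℱ X n ω) atTop (𝓝 c) := by
  refine (martingale_levyMartingale hX hX01).exists_ae_tendsto_of_integral_sq_le
    (memLp_levyMartingale hX hX01) (C := 2) fun n => ?_
  have : 0 ≤ ∫ ω, (levyNormalizer μ ℱ X n ω)⁻¹ ∂μ :=
    integral_nonneg fun ω => (inv_levyNormalizer_mem_Icc n ω).1
  linarith [integral_sq_levyMartingale_le (μ := μ) hX hX01 n, probReal_univ (μ := μ)]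

end Probability

theorem stmt_10 {Ω : Type*} {m0 : MeasurableSpace Ω} (μ : Measure Ω) [IsProbabilityMeasure μ]
    (ℱ : Filtration ℕ m0) (X : ℕ → Ω → ℝ)
    (hadapted : ∀ n, StronglyMeasurable[ℱ (n + 1)] (X (n + 1)))
    (h01 : ∀ n ω, X (n + 1) ω = 0 ∨ X (n + 1) ω = 1)
    (p : ℕ → Ω → ℝ)
    (hp : ∀ n, p (n + 1) =ᵐ[μ] μ[X (n + 1) | ℱ n]) :
    ∀ᵐ ω ∂μ,
      Tendsto (fun n => ∑ k ∈ Finset.range n, p (k + 1) ω) atTop atTop →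
      Tendsto (fun n => (∑ k ∈ Finset.range n, X (k + 1) ω) /
        (∑ k ∈ Finset.range n, p (k + 1) ω)) atTop (nhds 1) := by
  have hX01 : ∀ n ω, X (n + 1) ω ∈ Set.Icc (0 : ℝ) 1 := fun n ω => by
    rcases h01 n ω with h | h <;> simp [h]
  have hpq : ∀ᵐ ω ∂μ, ∀ n, p (n + 1) ω = clampedCondExp μ (ℱ n) (X (n + 1)) ω :=
    ae_all_iff.2 fun n => (hp n).trans (clampedCondExp_ae_eq (ℱ.le n)
      (integrable_of_mem_Icc ((hadapted n).mono (ℱ.le _)) (hX01 n)) (ae_of_all _ (hX01 n))).symm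
  filter_upwards [ae_exists_tendsto_levyMartingale hadapted hX01, hpq] with ω hM hpq hS
  simp only [hpq] at hS ⊢
  exact tendsto_sum_div_sum_of_tendsto_sum_sub_div (fun n => (clampedCondExp_mem_Icc _ ω).1) hS hM
end

section
/- For m, v, x real with |m| ≤ C, v ∈ [0, C² - m²], and any M, V ∈ ℝ, there exists x ∈ {m, C, -C} such that M(x - m) + V((x - m)² - v) ≤ 0. -/
theorem stmt_14 (C m v M V : ℝ) (hC : 0 < C) (hm : |m| ≤ C)
    (hv0 : 0 ≤ v) (hv : v ≤ C ^ 2 - m ^ 2) :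
    ∃ x ∈ ({m, C, -C} : Set ℝ),
      M * (x - m) + V * ((x - m) ^ 2 - v) ≤ 0 := by
  rcases le_or_gt 0 V with hV | hV
  · exact ⟨m, Or.inl rfl, by nlinarith⟩
  · have hm1 : -C ≤ m := neg_le_of_abs_le hm
    have hm2 : m ≤ C := le_of_abs_le hm
    rcases le_or_gt (M * (C - m) + V * ((C - m) ^ 2 - v)) 0 with h | h
    · exact ⟨C, Or.inr (Or.inl rfl), h⟩
    · refine ⟨-C, Or.inr (Or.inr rfl), ?_⟩
      by_contra hg
      push_neg at hg
      have ha : (0:ℝ) ≤ C - m := by linarith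
      have hb : (0:ℝ) ≤ C + m := by linarith
      have key : (C + m) * (M * (C - m) + V * ((C - m) ^ 2 - v))
          + (C - m) * (M * (-C - m) + V * ((-C - m) ^ 2 - v))
          = 2 * C * (V * (C ^ 2 - m ^ 2 - v)) := by ring
      have hVle : V * (C ^ 2 - m ^ 2 - v) ≤ 0 :=
        mul_nonpos_of_nonpos_of_nonneg hV.le (by linarith)
      have h1 : 0 ≤ (C + m) * (M * (C - m) + V * ((C - m) ^ 2 - v)) :=
        mul_nonneg hb h.le
      rcases eq_or_lt_of_le hm2 with heq | hlt
      · have hb' : (0:ℝ) < C + m := by rw [← heq]; linarith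
        nlinarith [mul_pos hb' h]
      · nlinarith [mul_pos (show (0:ℝ) < C - m by linarith) hg]
end

section
/- Let X_n take values in [0, C] with conditional means m_n = E[X_n | ℱ_{n-1}] and conditional variances v_n = E[(X_n - m_n)² | ℱ_{n-1}]. Then almost surely: ∑_n X_n converges if and only if both ∑_n m_n and ∑_n v_n converge. -/
/-!
Write `S n = ∑_{k<n} X (k+1)`. Its predictable part in the Doob decomposition is
`∑_{k<n} m (k+1)`, and its martingale part has increments bounded by `2C`; such a martingale is
a.s. bounded above exactly where it is bounded below. As `S` and its predictable part are both
nondecreasing, `S` diverges to `+∞` exactly where its predictable part does, i.e. `∑ X`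
converges iff `∑ m` converges. Finally `0 ≤ v ≤ E[X² | ℱ] ≤ C m`, so `∑ m < ∞` forces `∑ v < ∞`.
-/

open Filter MeasureTheory ProbabilityTheory Finset

section

variable {Ω : Type*} {m0 : MeasurableSpace Ω} {μ : Measure Ω}

namespace ProbabilityTheory

lemma condVar_nonneg {m : MeasurableSpace Ω} {X : Ω → ℝ} : 0 ≤ᵐ[μ] Var[X; μ | m] :=
  condExp_nonneg (ae_of_all μ fun ω => sq_nonneg ((X - μ[X | m]) ω))

lemma condVar_le_mul_condExp [IsFiniteMeasure μ] {X : Ω → ℝ} {C : ℝ}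
    (hX : AEStronglyMeasurable X μ) (hbdd : ∀ᵐ ω ∂μ, X ω ∈ Set.Icc 0 C)
    {m : MeasurableSpace Ω} (hm : m ≤ m0) :
    Var[X; μ | m] ≤ᵐ[μ] C • μ[X | m] := by
  have hX_memLp : MemLp X 2 μ := MemLp.of_bound hX C <| by
    filter_upwards [hbdd] with ω hω
    rw [Real.norm_eq_abs, abs_of_nonneg hω.1]
    exact hω.2
  have hsq_le : X ^ 2 ≤ᵐ[μ] C • X := by
    filter_upwards [hbdd] with ω hω
    simpa only [Pi.pow_apply, Pi.smul_apply, smul_eq_mul, sq] using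
      mul_le_mul_of_nonneg_right hω.2 hω.1
  filter_upwards [condVar_ae_le_condExp_sq hm hX_memLp,
    condExp_mono hX_memLp.integrable_sq (hX_memLp.integrable one_le_two |>.smul C) hsq_le,
    condExp_smul C X m] with ω hvar hmono hsmul
  exact hvar.trans (hmono.trans_eq hsmul)

end ProbabilityTheory

namespace MeasureTheory

theorem ae_summable_iff_summable_condExp [IsFiniteMeasure μ] {ℱ : Filtration ℕ m0}
    {ξ : ℕ → Ω → ℝ} {C : ℝ}
    (hξ : ∀ n, StronglyMeasurable[ℱ (n + 1)] (ξ n))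
    (hbdd : ∀ n, ∀ᵐ ω ∂μ, ξ n ω ∈ Set.Icc 0 C) :
    ∀ᵐ ω ∂μ, Summable (fun n => ξ n ω) ↔ Summable (fun n => μ[ξ n | ℱ n] ω) := by
  set S : ℕ → Ω → ℝ := fun n => ∑ k ∈ range n, ξ k
  have hS_succ : ∀ n, S (n + 1) - S n = ξ n := fun n => sum_range_succ_sub_sum ξ
  have hS_succ_apply : ∀ n ω, S (n + 1) ω - S n ω = ξ n ω := fun n ω => congrFun (hS_succ n) ω
  have hξ_int : ∀ n, Integrable (ξ n) μ := fun n =>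
    Integrable.of_mem_Icc 0 C ((hξ n).mono (ℱ.le _)).measurable.aemeasurable (hbdd n)
  have hS_adapted : StronglyAdapted ℱ S := fun n =>
    Finset.stronglyMeasurable_sum _ fun k hk => (hξ k).mono (ℱ.mono (mem_range.1 hk))
  have hS_mono : ∀ᵐ ω ∂μ, ∀ n, S n ω ≤ S (n + 1) ω := by
    filter_upwards [ae_all_iff.2 hbdd] with ω hω n
    linarith [hS_succ_apply n ω, (hω n).1]
  have hS_incr : ∀ᵐ ω ∂μ, ∀ n, |S (n + 1) ω - S n ω| ≤ C.toNNReal := by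
    filter_upwards [ae_all_iff.2 hbdd] with ω hω n
    rw [hS_succ_apply, abs_of_nonneg (hω n).1]
    exact (hω n).2.trans (Real.le_coe_toNNReal C)
  have hpredictable : ∀ n ω, predictablePart S ℱ μ n ω = ∑ k ∈ range n, μ[ξ k | ℱ k] ω := by
    intro n ω
    simp only [predictablePart, hS_succ, Finset.sum_apply]
  have hcondExp_nonneg : ∀ᵐ ω ∂μ, ∀ n, 0 ≤ μ[ξ n | ℱ n] ω :=
    ae_all_iff.2 fun n => condExp_nonneg (by filter_upwards [hbdd n] with ω hω using hω.1)
  filter_upwards [tendsto_sum_indicator_atTop_iff hS_mono hS_adapted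
      (fun n => integrable_finsetSum' _ fun k _ => hξ_int k) hS_incr,
    ae_all_iff.2 hbdd, hcondExp_nonneg] with ω hω hξω hcondExpω
  rw [summable_iff_not_tendsto_nat_atTop_of_nonneg fun n => (hξω n).1,
    summable_iff_not_tendsto_nat_atTop_of_nonneg hcondExpω]
  simpa only [S, hpredictable, Finset.sum_apply] using not_congr hω

end MeasureTheory

end

theorem stmt_18_general {Ω : Type*} {m0 : MeasurableSpace Ω} (μ : Measure Ω) [IsProbabilityMeasure μ]
    (ℱ : Filtration ℕ m0) (X : ℕ → Ω → ℝ) (C : ℝ)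
    (hadapted : ∀ n, StronglyMeasurable[ℱ (n + 1)] (X (n + 1)))
    (hbdd : ∀ n, ∀ᵐ ω ∂μ, X (n + 1) ω ∈ Set.Icc 0 C)
    (m : ℕ → Ω → ℝ)
    (hm : ∀ n, m (n + 1) =ᵐ[μ] μ[X (n + 1) | ℱ n])
    (v : ℕ → Ω → ℝ)
    (hv : ∀ n, v (n + 1) =ᵐ[μ] μ[fun ω => (X (n + 1) ω - m (n + 1) ω) ^ 2 | ℱ n]) :
    ∀ᵐ ω ∂μ, (Summable (fun n => X (n + 1) ω) ↔
      Summable (fun n => m (n + 1) ω) ∧ Summable (fun n => v (n + 1) ω)) := by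
  have hv_bound : ∀ n, ∀ᵐ ω ∂μ, v (n + 1) ω ∈ Set.Icc 0 (C * m (n + 1) ω) := by
    intro n
    have hv_condVar : v (n + 1) =ᵐ[μ] Var[X (n + 1); μ | ℱ n] :=
      (hv n).trans <| condExp_congr_ae <| by filter_upwards [hm n] with ω hω; simp [hω]
    filter_upwards [hv_condVar, hm n, condVar_nonneg,
      condVar_le_mul_condExp ((hadapted n).mono (ℱ.le _)).aestronglyMeasurable (hbdd n) (ℱ.le n)]
      with ω hvω hmω h0 hle
    rw [hvω, hmω]
    exact ⟨h0, hle⟩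
  filter_upwards [ae_summable_iff_summable_condExp hadapted hbdd, ae_all_iff.2 hm,
    ae_all_iff.2 hv_bound] with ω hω hmω hvω
  have hv_summable : Summable (fun n => m (n + 1) ω) → Summable (fun n => v (n + 1) ω) :=
    fun hsum => .of_nonneg_of_le (fun n => (hvω n).1) (fun n => (hvω n).2) (hsum.mul_left _)
  rw [and_iff_left_of_imp hv_summable, hω, funext hmω]

theorem stmt_18 {Ω : Type*} {m0 : MeasurableSpace Ω} (μ : Measure Ω) [IsProbabilityMeasure μ]
    (ℱ : Filtration ℕ m0) (X : ℕ → Ω → ℝ) (C : ℝ) (hC : 0 < C)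
    (hadapted : ∀ n, StronglyMeasurable[ℱ (n + 1)] (X (n + 1)))
    (hbdd : ∀ n, ∀ᵐ ω ∂μ, X (n + 1) ω ∈ Set.Icc 0 C)
    (m : ℕ → Ω → ℝ)
    (hm : ∀ n, m (n + 1) =ᵐ[μ] μ[X (n + 1) | ℱ n])
    (v : ℕ → Ω → ℝ)
    (hv : ∀ n, v (n + 1) =ᵐ[μ] μ[fun ω => (X (n + 1) ω - m (n + 1) ω) ^ 2 | ℱ n]) :
    ∀ᵐ ω ∂μ, (Summable (fun n => X (n + 1) ω) ↔
      Summable (fun n => m (n + 1) ω) ∧ Summable (fun n => v (n + 1) ω)) :=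
  stmt_18_general μ ℱ X C hadapted hbdd m hm v hv
end

section
/- Let (X_n) be adapted with X_n ∈ {0, 1, -1}, E[X_n | ℱ_{n-1}] = 0, and v_n = E[X_n² | ℱ_{n-1}] ∈ [0,1]. Then almost surely: ∑_n v_n < ∞ if and only if X_n = 0 for all but finitely many n. -/
open Filter MeasureTheory

theorem stmt_19 {Ω : Type*} {m0 : MeasurableSpace Ω} (μ : Measure Ω) [IsProbabilityMeasure μ]
    (ℱ : Filtration ℕ m0) (X : ℕ → Ω → ℝ)
    (hadapted : ∀ n, StronglyMeasurable[ℱ (n + 1)] (X (n + 1)))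
    (hvals : ∀ n ω, X (n + 1) ω ∈ ({-1, 0, 1} : Set ℝ))
    (hmean : ∀ n, μ[X (n + 1) | ℱ n] =ᵐ[μ] 0)
    (v : ℕ → Ω → ℝ) (hv01 : ∀ n ω, v (n + 1) ω ∈ Set.Icc (0 : ℝ) 1)
    (hv : ∀ n, v (n + 1) =ᵐ[μ] μ[fun ω => (X (n + 1) ω) ^ 2 | ℱ n]) :
    ∀ᵐ ω ∂μ, (Summable (fun n => v (n + 1) ω) ↔
      ∀ᶠ n in atTop, X (n + 1) ω = 0) := by
  classical
  set s : ℕ → Set Ω := fun n => Nat.rec (motive := fun _ => Set Ω) ∅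
    (fun k _ => {ω | X (k + 1) ω ≠ 0}) n with hs_def
  have hs0 : s 0 = ∅ := rfl
  have hssucc : ∀ n, s (n + 1) = {ω | X (n + 1) ω ≠ 0} := fun n => rfl
  have hs : ∀ n, MeasurableSet[ℱ n] (s n) := by
    intro n
    cases n with
    | zero => simpa [hs0] using (MeasurableSet.empty : MeasurableSet[ℱ 0] ∅)
    | succ k =>
      rw [hssucc]
      exact ((hadapted k).measurable (measurableSet_singleton (0:ℝ)).compl)
  -- indicator of s (n+1) equals X(n+1)^2
  have hind : ∀ n, (s (n + 1)).indicator (1 : Ω → ℝ) = fun ω => (X (n + 1) ω) ^ 2 := by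
    intro n
    funext ω
    have h := hvals n ω
    simp only [Set.mem_insert_iff, Set.mem_singleton_iff] at h
    rcases h with h | h | h <;> simp [hssucc, Set.indicator_apply, h]
  have hBC := ae_mem_limsup_atTop_iff (ℱ := ℱ) μ hs
  have hveq : ∀ᵐ ω ∂μ, ∀ n, v (n + 1) ω =
      (μ[(s (n + 1)).indicator (1 : Ω → ℝ) | ℱ n]) ω := by
    rw [ae_all_iff]
    intro n
    filter_upwards [hv n] with ω hω
    rw [hind n]; exact hω
  filter_upwards [hBC, hveq] with ω hω hveq
  have hsum_eq : ∀ n, ∑ k ∈ Finset.range n, v (k + 1) ω =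
      ∑ k ∈ Finset.range n, (μ[(s (k + 1)).indicator (1 : Ω → ℝ) | ℱ k]) ω := by
    intro n; exact Finset.sum_congr rfl fun k _ => hveq k
  have hnonneg : ∀ n, 0 ≤ v (n + 1) ω := fun n => (hv01 n ω).1
  rw [summable_iff_not_tendsto_nat_atTop_of_nonneg hnonneg]
  constructor
  · intro h
    have : ω ∉ limsup s atTop := by
      intro hmem
      exact h (by simpa [hsum_eq] using hω.1 hmem)
    rw [mem_limsup_iff_frequently_mem, not_frequently] at this
    obtain ⟨N, hN⟩ := eventually_atTop.1 this
    refine eventually_atTop.2 ⟨N, fun n hn => ?_⟩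
    have := hN (n + 1) (le_trans hn (Nat.le_succ n))
    rw [hssucc] at this
    simpa using this
  · intro h hT
    have : ω ∈ limsup s atTop := by
      apply hω.2
      simpa [hsum_eq] using hT
    rw [mem_limsup_iff_frequently_mem] at this
    obtain ⟨N, hN⟩ := eventually_atTop.1 h
    obtain ⟨n, hn, hmem⟩ := (frequently_atTop.1 this) (N + 1)
    cases n with
    | zero => exact absurd hmem (by simp [hs0])
    | succ k =>
      rw [hssucc] at hmem
      exact hmem (hN k (Nat.succ_le_succ_iff.1 hn))
end
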